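/- arXiv:1511.03967 — 2 statements merged into one kernel-verified Lean document; each statement's English description precedes it below -/
import Mathlib

section
/- Let (a_n) be a sequence of positive real numbers such that the series ∑_{n=1}^∞ a_n^t converges for every t > t* and diverges at t = t*. Then there exists a sequence (ε_n) of positive real numbers with ε_n → 0 such that ∑_{n=1}^∞ a_n^{t* + ε_n} < ∞. -/
/-!
Each exponent `t* + 1/(j+1)` gives a convergent series, so for every `j` there is a cutoff
`N j` beyond which any finite block of its terms sums to less than a fixed multiple of `2⁻ʲ`.
Using at index `n` the exponent `t* + 1/(k n + 1)`, where `k n` is the largest `j ≤ n` whose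
cutoff has been passed, splits the perturbed series into blocks dominated by a geometric
series, while `k n → ∞`.
-/

open Filter Topology Finset

theorem Summable.exists_forall_sum_lt {f : ℕ → ℝ} (hf : Summable f) {ε : ℝ} (hε : 0 < ε) :
    ∃ N, ∀ t : Finset ℕ, (∀ n ∈ t, N ≤ n) → ∑ n ∈ t, f n < ε := by
  obtain ⟨s, hs⟩ := summable_iff_vanishing.1 hf (Set.Iio ε) (Iio_mem_nhds hε)
  refine ⟨s.sup id + 1, fun t ht => hs t (disjoint_left.2 fun n hnt hns => ?_)⟩
  have hns : n ≤ s.sup id := le_sup (f := id) hns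
  have hnt := ht n hnt
  omega

/-- Also `0` when no `j ≤ n` has `N j ≤ n`, hence the `j ≠ 0` in `le_of_cutoffIndex_eq`. -/
def cutoffIndex (N : ℕ → ℕ) (n : ℕ) : ℕ :=
  Nat.findGreatest (fun j => N j ≤ n) n

theorem cutoffIndex_le (N : ℕ → ℕ) (n : ℕ) : cutoffIndex N n ≤ n :=
  Nat.findGreatest_le n

theorem le_of_cutoffIndex_eq {N : ℕ → ℕ} {n j : ℕ} (h : cutoffIndex N n = j) (hj : j ≠ 0) :
    N j ≤ n :=
  Nat.findGreatest_of_ne_zero (P := fun j => N j ≤ n) h hj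

theorem tendsto_cutoffIndex_atTop (N : ℕ → ℕ) : Tendsto (cutoffIndex N) atTop atTop :=
  tendsto_atTop_atTop.2 fun j => ⟨max j (N j), fun _ hn =>
    Nat.le_findGreatest ((le_max_left _ _).trans hn) ((le_max_right _ _).trans hn)⟩

theorem exists_tendsto_atTop_summable_diag {f : ℕ → ℕ → ℝ} (hf₀ : ∀ j n, 0 ≤ f j n)
    (hf : ∀ j, Summable (f j)) :
    ∃ k : ℕ → ℕ, Tendsto k atTop atTop ∧ Summable fun n => f (k n) n := by
  -- the block `k n = 0` may contain terms before the cutoff `N 0`; they are bounded by `∑' f 0`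
  set c := ∑' n, f 0 n + 1
  have hc : 0 < c := by have : 0 ≤ ∑' n, f 0 n := tsum_nonneg (hf₀ 0); positivity
  choose N hN using fun j => (hf j).exists_forall_sum_lt (mul_pos hc (pow_pos one_half_pos j))
  set k := cutoffIndex N
  have hblock : ∀ M j, ∑ n ∈ (range M).filter (k · = j), f (k n) n ≤ c * (1 / 2) ^ j := by
    intro M j
    rw [sum_congr rfl fun n hn => by rw [(mem_filter.1 hn).2]]
    rcases eq_or_ne j 0 with rfl | hj
    · calc ∑ n ∈ (range M).filter (k · = 0), f 0 n ≤ ∑' n, f 0 n :=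
            (hf 0).sum_le_tsum _ fun n _ => hf₀ 0 n
        _ ≤ c * (1 / 2) ^ 0 := by simp [c]
    · exact (hN j _ fun n hn => le_of_cutoffIndex_eq (mem_filter.1 hn).2 hj).le
  refine ⟨k, tendsto_cutoffIndex_atTop N,
    summable_of_sum_range_le (c := 2 * c) (fun n => hf₀ _ n) fun M => ?_⟩
  calc ∑ n ∈ range M, f (k n) n
      = ∑ j ∈ range M, ∑ n ∈ (range M).filter (k · = j), f (k n) n :=
        (sum_fiberwise_of_maps_to (fun n hn => mem_range.2
          ((cutoffIndex_le N n).trans_lt (mem_range.1 hn))) _).symm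
    _ ≤ ∑ j ∈ range M, c * (1 / 2) ^ j := sum_le_sum fun j _ => hblock M j
    _ = c * ∑ j ∈ range M, (1 / 2 : ℝ) ^ j := (mul_sum ..).symm
    _ ≤ c * 2 := by gcongr; exact sum_geometric_two_le M
    _ = 2 * c := mul_comm ..

theorem stmt_2_general (a : ℕ → ℝ) (ha : ∀ n, 0 < a n) (tstar : ℝ)
    (hconv : ∀ t, tstar < t → Summable (fun n => a n ^ t)) :
    ∃ ε : ℕ → ℝ, (∀ n, 0 < ε n) ∧ Tendsto ε atTop (𝓝 0) ∧
      Summable (fun n => a n ^ (tstar + ε n)) := by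
  obtain ⟨k, hk, hsum⟩ := exists_tendsto_atTop_summable_diag
    (f := fun j n => a n ^ (tstar + 1 / ((j : ℝ) + 1)))
    (fun _ n => (Real.rpow_pos_of_pos (ha n) _).le)
    (fun j => hconv _ (lt_add_of_pos_right tstar (by positivity)))
  exact ⟨fun n => 1 / ((k n : ℝ) + 1), fun _ => by positivity,
    tendsto_one_div_add_atTop_nhds_zero_nat.comp hk, hsum⟩

theorem stmt_2 (a : ℕ → ℝ) (ha : ∀ n, 0 < a n) (tstar : ℝ)
    (hconv : ∀ t, tstar < t → Summable (fun n => a n ^ t))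
    (hdiv : ¬ Summable (fun n => a n ^ tstar)) :
    ∃ ε : ℕ → ℝ, (∀ n, 0 < ε n) ∧ Tendsto ε atTop (𝓝 0) ∧
      Summable (fun n => a n ^ (tstar + ε n)) :=
  stmt_2_general a ha tstar hconv
end

section
/- Let τ, Δ : Σ → ℝ be positive measurable functions, and suppose that for each r > 1 the set {x : τ(x) ≤ r} is contained in a set on which Δ ≥ G(r) for some G(r) > 0. Let (μ_n) be probability measures with (∫ Δ dμ_n)/(∫ τ dμ_n) → 0. Then ∫ τ dμ_n → ∞. -/
open Filter Topology MeasureTheory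

theorem integral_pos_of_forall_pos {Ω : Type*} [MeasurableSpace Ω] {μ : Measure Ω} [NeZero μ]
    {f : Ω → ℝ} (hf : ∀ x, 0 < f x) (hfi : Integrable f μ) : 0 < ∫ x, f x ∂μ := by
  rw [integral_pos_iff_support_of_nonneg (fun x ↦ (hf x).le) hfi,
    Function.support_eq_univ fun x ↦ (hf x).ne']
  exact Measure.measure_univ_pos.mpr (NeZero.ne μ)

/-- Integrated form of `G * (1 - τ / r) ≤ Δ`, which holds pointwise: on `{τ ≤ r}` by hypothesis,
and elsewhere because the left side is negative. This absorbs Markov's inequality for `τ`. -/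
theorem const_mul_sub_integral_div_le_integral {Ω : Type*} [MeasurableSpace Ω] {μ : Measure Ω}
    [IsFiniteMeasure μ] {τ Δ : Ω → ℝ} (hτ : ∀ x, 0 ≤ τ x) (hΔ : ∀ x, 0 ≤ Δ x)
    (hτi : Integrable τ μ) (hΔi : Integrable Δ μ) {r G : ℝ} (hr : 0 < r) (hG : 0 ≤ G)
    (hGΔ : ∀ x, τ x ≤ r → G ≤ Δ x) :
    G * (μ.real Set.univ - (∫ x, τ x ∂μ) / r) ≤ ∫ x, Δ x ∂μ := by
  have hpointwise : ∀ x, G * (1 - τ x / r) ≤ Δ x := by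
    intro x
    rcases le_or_gt (τ x) r with hle | hgt
    · have : 0 ≤ τ x / r := div_nonneg (hτ x) hr.le
      nlinarith [hGΔ x hle]
    · have : 1 < τ x / r := (one_lt_div hr).mpr hgt
      nlinarith [hΔ x]
  have hlhs : Integrable (fun x ↦ G * (1 - τ x / r)) μ :=
    ((integrable_const 1).sub (hτi.div_const r)).const_mul G
  calc G * (μ.real Set.univ - (∫ x, τ x ∂μ) / r)
      = ∫ x, G * (1 - τ x / r) ∂μ := by
        rw [integral_const_mul, integral_sub (integrable_const 1) (hτi.div_const r),
          integral_const, integral_div, smul_eq_mul, mul_one]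
    _ ≤ ∫ x, Δ x ∂μ := integral_mono hlhs hΔi hpointwise

theorem stmt_11_general {Ω : Type*} [MeasurableSpace Ω] (τ Δ : Ω → ℝ)
    (hτpos : ∀ x, 0 < τ x) (hΔpos : ∀ x, 0 < Δ x)
    (hG : ∀ r : ℝ, 1 < r → ∃ G : ℝ, 0 < G ∧ ∀ x, τ x ≤ r → G ≤ Δ x)
    (μ : ℕ → Measure Ω) (hprob : ∀ n, IsProbabilityMeasure (μ n))
    (hintτ : ∀ n, Integrable τ (μ n)) (hintΔ : ∀ n, Integrable Δ (μ n))
    (hlim : Tendsto (fun n => (∫ x, Δ x ∂(μ n)) / (∫ x, τ x ∂(μ n))) atTop (𝓝 0)) :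
    Tendsto (fun n => ∫ x, τ x ∂(μ n)) atTop atTop := by
  rw [tendsto_atTop]
  intro M
  set r := max (2 * M) 2
  have hr1 : 1 < r := one_lt_two.trans_le (le_max_right _ _)
  have hr0 : 0 < r := zero_lt_one.trans hr1
  obtain ⟨G, hG0, hGΔ⟩ := hG r hr1
  filter_upwards [hlim.eventually (gt_mem_nhds (div_pos hG0 hr0))] with n hratio
  by_contra! hsmall
  set I := ∫ x, τ x ∂μ n
  set D := ∫ x, Δ x ∂μ n
  have hIr : I / r < 1 / 2 := by
    rw [div_lt_iff₀ hr0]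
    linarith [le_max_left (2 * M) 2]
  have hlower : G * (1 - I / r) ≤ D := by
    simpa only [probReal_univ] using const_mul_sub_integral_div_le_integral
      (fun x ↦ (hτpos x).le) (fun x ↦ (hΔpos x).le) (hintτ n) (hintΔ n) hr0 hG0.le hGΔ
  have hupper : D < G * (I / r) :=
    calc D < G / r * I := (div_lt_iff₀ (integral_pos_of_forall_pos hτpos (hintτ n))).mp hratio
      _ = G * (I / r) := by ring
  nlinarith

theorem stmt_11 {Ω : Type*} [MeasurableSpace Ω] (τ Δ : Ω → ℝ)
    (hτpos : ∀ x, 0 < τ x) (hΔpos : ∀ x, 0 < Δ x)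
    (hτmeas : Measurable τ) (hΔmeas : Measurable Δ)
    (hG : ∀ r : ℝ, 1 < r → ∃ G : ℝ, 0 < G ∧ ∀ x, τ x ≤ r → G ≤ Δ x)
    (μ : ℕ → Measure Ω) (hprob : ∀ n, IsProbabilityMeasure (μ n))
    (hintτ : ∀ n, Integrable τ (μ n)) (hintΔ : ∀ n, Integrable Δ (μ n))
    (hlim : Tendsto (fun n => (∫ x, Δ x ∂(μ n)) / (∫ x, τ x ∂(μ n))) atTop (𝓝 0)) :
    Tendsto (fun n => ∫ x, τ x ∂(μ n)) atTop atTop :=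
  stmt_11_general τ Δ hτpos hΔpos hG μ hprob hintτ hintΔ hlim
end
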